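/- arXiv:1704.05491 — 3 statements merged into one kernel-verified Lean document; each statement's English description precedes it below -/
import Mathlib

section
/- Let P_1, …, P_N be discrete probability measures on ℝ^d, let λ_1, …, λ_N > 0 with ∑_{i=1}^N λ_i = 1, and let P̄ be a barycenter of P_1, …, P_N. Then ANY optimal transport from P̄ to P_1, …, P_N is non-mass splitting: if π_1, …, π_N are couplings of (P̄, P_1), …, (P̄, P_N) with ∑_{i=1}^N λ_i ∫ ‖x − y‖² dπ_i(x,y) = φ(P̄), then for every support point x of P̄ and every i there is exactly one point y_i(x) ∈ supp(P_i) with π_i({(x, y_i(x))}) > 0, and moreover π_i({(x, y_i(x))}) equals the mass of P̄ at x and x = ∑_{i=1}^N λ_i y_i(x). -/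
open MeasureTheory ENNReal

/-- Points of `ℝ^d`. -/
abbrev Pt (d : ℕ) := EuclideanSpace ℝ (Fin d)

/-- The set of atoms (support points) of a measure. -/
def msupp {α : Type*} [MeasurableSpace α] (P : Measure α) : Set α := {x | P {x} ≠ 0}

/-- A measure is finitely supported (discrete) if its set of atoms is finite and
carries all the mass. -/
def FinitelySupported {α : Type*} [MeasurableSpace α] (P : Measure α) : Prop :=
  (msupp P).Finite ∧ P (msupp P)ᶜ = 0

/-- Finite second moment. -/
def FiniteSecondMoment {d : ℕ} (P : Measure (Pt d)) : Prop :=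
  ∫⁻ x, ENNReal.ofReal (‖x‖ ^ 2) ∂P < ⊤

/-- The squared 2-Wasserstein distance: the infimum of `∫ ‖x - y‖² dπ` over all
couplings `π` of `P` and `Q`. -/
noncomputable def W2sq {d : ℕ} (P Q : Measure (Pt d)) : ℝ≥0∞ :=
  ⨅ π ∈ {π : Measure (Pt d × Pt d) | π.map Prod.fst = P ∧ π.map Prod.snd = Q},
    ∫⁻ p, ENNReal.ofReal (‖p.1 - p.2‖ ^ 2) ∂π

/-- The barycenter objective `φ(P) = ∑ i, λ i * W₂(P, P i)²`. -/
noncomputable def phi {d N : ℕ} (l : Fin N → ℝ) (Pm : Fin N → Measure (Pt d))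
    (P : Measure (Pt d)) : ℝ≥0∞ :=
  ∑ i, ENNReal.ofReal (l i) * W2sq P (Pm i)

/-- A (Wasserstein) barycenter: a probability measure with finite second moment
minimizing `φ` among all such measures. -/
def IsBarycenter {d N : ℕ} (l : Fin N → ℝ) (Pm : Fin N → Measure (Pt d))
    (P : Measure (Pt d)) : Prop :=
  IsProbabilityMeasure P ∧ FiniteSecondMoment P ∧
    ∀ Q : Measure (Pt d), IsProbabilityMeasure Q → FiniteSecondMoment Q →
      phi l Pm P ≤ phi l Pm Q

/-- The set `S` of weighted centroids of combinations of support points,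
one from each measure. -/
def centroidSet {d N : ℕ} (l : Fin N → ℝ) (Pm : Fin N → Measure (Pt d)) : Set (Pt d) :=
  {y | ∃ x : Fin N → Pt d, (∀ i, x i ∈ msupp (Pm i)) ∧ y = ∑ i, l i • x i}

/-- The union `S_org` of the supports of the measures. -/
def origSupport {d N : ℕ} (Pm : Fin N → Measure (Pt d)) : Set (Pt d) :=
  ⋃ i, msupp (Pm i)

/-!
Fix an atom `x` of the barycenter `P̄`. The optimal couplings split the mass at `x` into
fibres `κᵢ`, each of mass `P̄{x}`; glue them into a measure `ρ` on tuples `g = (g₁, …, g_N)` with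
marginals `κᵢ`. Sending the mass of each tuple from `x` to its centroid `m g = ∑ λᵢ gᵢ` instead
gives a competitor for the barycenter together with couplings to the `Pᵢ` whose total cost is
smaller by exactly `∫ ‖x - m g‖² dρ`, because
`∑ λᵢ ‖x - gᵢ‖² = ‖x - m g‖² + ∑ λᵢ ‖m g - gᵢ‖²`.
Optimality forces `m g = x` for `ρ`-almost every `g`, hence for every tuple of atoms of the
(finitely supported) fibres, and changing a single coordinate of such a tuple shows that every
fibre has exactly one atom.
-/

open Set

theorem ofReal_norm_add_sq_le {E : Type*} [SeminormedAddCommGroup E] (a b : E) :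
    ENNReal.ofReal (‖a + b‖ ^ 2) ≤ 2 * ENNReal.ofReal (‖a‖ ^ 2) + 2 * ENNReal.ofReal (‖b‖ ^ 2) := by
  calc _ ≤ ENNReal.ofReal (2 * (‖a‖ ^ 2 + ‖b‖ ^ 2)) := ENNReal.ofReal_le_ofReal
        ((pow_le_pow_left₀ (norm_nonneg _) (norm_add_le a b) 2).trans add_sq_le)
    _ = _ := by
      rw [ENNReal.ofReal_mul zero_le_two, ENNReal.ofReal_add (by positivity) (by positivity),
        ENNReal.ofReal_ofNat, mul_add]

theorem sum_mul_norm_sub_sq {ι E : Type*} [Fintype ι] [NormedAddCommGroup E]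
    [InnerProductSpace ℝ E] {l : ι → ℝ} (hsum : ∑ i, l i = 1) (g : ι → E) (x : E) :
    ∑ i, l i * ‖x - g i‖ ^ 2 =
      ‖x - ∑ i, l i • g i‖ ^ 2 + ∑ i, l i * ‖∑ j, l j • g j - g i‖ ^ 2 := by
  set m := ∑ j, l j • g j
  have hcross : ∑ i, l i * (2 * inner ℝ (x - m) (m - g i)) = 0 := by
    have hbal : ∑ i, l i • (m - g i) = 0 := by
      simp_rw [smul_sub]
      rw [Finset.sum_sub_distrib, ← Finset.sum_smul, hsum, one_smul, sub_self]
    calc ∑ i, l i * (2 * inner ℝ (x - m) (m - g i))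
        = 2 * inner ℝ (x - m) (∑ i, l i • (m - g i)) := by
          rw [inner_sum, Finset.mul_sum]
          refine Finset.sum_congr rfl fun i _ => ?_
          rw [real_inner_smul_right]
          ring
      _ = 0 := by rw [hbal, inner_zero_right, mul_zero]
  calc ∑ i, l i * ‖x - g i‖ ^ 2
      = ∑ i, l i * (‖x - m‖ ^ 2 + 2 * inner ℝ (x - m) (m - g i) + ‖m - g i‖ ^ 2) := by
        refine Finset.sum_congr rfl fun i _ => ?_
        rw [← norm_add_sq_real, sub_add_sub_cancel]
    _ = _ := by
        simp_rw [mul_add, Finset.sum_add_distrib, ← Finset.sum_mul, hsum, one_mul, hcross,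
          add_zero]

theorem sum_ofReal_mul_ofReal_norm_sub_sq {ι E : Type*} [Fintype ι] [NormedAddCommGroup E]
    [InnerProductSpace ℝ E] {l : ι → ℝ} (hl : ∀ i, 0 ≤ l i) (hsum : ∑ i, l i = 1) (g : ι → E)
    (x : E) :
    ∑ i, ENNReal.ofReal (l i) * ENNReal.ofReal (‖x - g i‖ ^ 2) =
      ENNReal.ofReal (‖x - ∑ i, l i • g i‖ ^ 2) +
        ∑ i, ENNReal.ofReal (l i) * ENNReal.ofReal (‖∑ j, l j • g j - g i‖ ^ 2) := by
  simp_rw [← ENNReal.ofReal_mul (hl _)]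
  have hterm (y : E) (i : ι) : 0 ≤ l i * ‖y - g i‖ ^ 2 := mul_nonneg (hl i) (sq_nonneg _)
  rw [← ENNReal.ofReal_sum_of_nonneg (fun i _ => hterm x i),
    ← ENNReal.ofReal_sum_of_nonneg (fun i _ => hterm _ i),
    ← ENNReal.ofReal_add (sq_nonneg _) (Finset.sum_nonneg fun i _ => hterm _ i),
    sum_mul_norm_sub_sq hsum]

theorem eq_of_sum_smul_update_eq {ι E : Type*} [Fintype ι] [DecidableEq ι] [AddCommGroup E]
    [Module ℝ E] {l : ι → ℝ} {i : ι} (hl : l i ≠ 0) {g : ι → E} {a : E}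
    (h : ∑ j, l j • Function.update g i a j = ∑ j, l j • g j) : a = g i := by
  have hupd : (fun j => l j • Function.update g i a j) =
      Function.update (fun j => l j • g j) i (l i • a) := by
    ext j; rcases eq_or_ne j i with rfl | hj <;> simp [*]
  rw [hupd, Finset.sum_update_of_mem (Finset.mem_univ i),
    ← Finset.add_sum_erase _ _ (Finset.mem_univ i), Finset.sdiff_singleton_eq_erase] at h
  exact smul_right_injective E hl (add_right_cancel h)

namespace MeasureTheory.Measure

variable {α β : Type*} [MeasurableSpace α] [MeasurableSpace β]

theorem map_fst_univ_eq_map_snd_univ (π : Measure (α × β)) :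
    π.map Prod.fst univ = π.map Prod.snd univ := by
  rw [map_apply measurable_fst .univ, map_apply measurable_snd .univ, preimage_univ,
    preimage_univ]

variable [MeasurableSingletonClass α]

theorem comap_prodMk_apply (π : Measure (α × β)) (x : α) (s : Set β) :
    π.comap (Prod.mk x) s = π ({x} ×ˢ s) := by
  rw [(measurableEmbedding_prodMk_left x).comap_apply, singleton_prod]

theorem comap_prodMk_univ (π : Measure (α × β)) (x : α) :
    π.comap (Prod.mk x) univ = π.map Prod.fst {x} := by
  rw [comap_prodMk_apply, prod_univ, map_apply measurable_fst (measurableSet_singleton x)]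

theorem comap_prodMk_le_map_snd (π : Measure (α × β)) (x : α) :
    π.comap (Prod.mk x) ≤ π.map Prod.snd := by
  refine le_iff'.2 fun s => ?_
  rw [comap_prodMk_apply]
  exact (measure_mono (prod_subset_preimage_snd _ _)).trans
    (le_map_apply measurable_snd.aemeasurable s)

theorem map_comap_prodMk (π : Measure (α × β)) (x : α) :
    (π.comap (Prod.mk x)).map (Prod.mk x) = π.restrict (Prod.fst ⁻¹' {x}) := by
  rw [(measurableEmbedding_prodMk_left x).map_comap, preimage_fst_singleton_eq_range]

theorem map_snd_restrict_fst_preimage_singleton (π : Measure (α × β)) (x : α) :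
    (π.restrict (Prod.fst ⁻¹' {x})).map Prod.snd = π.comap (Prod.mk x) := by
  rw [← map_comap_prodMk, map_map measurable_snd measurable_prodMk_left]
  exact map_id

noncomputable def replaceFiber (π : Measure (α × β)) (x : α) (σ : Measure (α × β)) :
    Measure (α × β) :=
  π.restrict (Prod.fst ⁻¹' {x}ᶜ) + σ

theorem map_fst_replaceFiber (π σ : Measure (α × β)) (x : α) :
    (π.replaceFiber x σ).map Prod.fst = (π.map Prod.fst).restrict {x}ᶜ + σ.map Prod.fst := by
  rw [replaceFiber, Measure.map_add _ _ measurable_fst,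
    restrict_map measurable_fst (measurableSet_singleton x).compl]

theorem map_snd_replaceFiber (π σ : Measure (α × β)) (x : α)
    (hσ : σ.map Prod.snd = π.comap (Prod.mk x)) :
    (π.replaceFiber x σ).map Prod.snd = π.map Prod.snd := by
  rw [replaceFiber, Measure.map_add _ _ measurable_snd, hσ,
    ← map_snd_restrict_fst_preimage_singleton, ← Measure.map_add _ _ measurable_snd, add_comm,
    preimage_compl, restrict_add_restrict_compl (measurable_fst (measurableSet_singleton x))]

end MeasureTheory.Measure

namespace MeasureTheory

variable {α β : Type*} [MeasurableSpace α] [MeasurableSpace β]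

theorem lintegral_ofReal_norm_add_sq_le {E : Type*} [NormedAddCommGroup E] [MeasurableSpace E]
    [OpensMeasurableSpace E] (μ : Measure α) (f : α → E) {g : α → E} (hg : Measurable g) :
    ∫⁻ a, ENNReal.ofReal (‖f a + g a‖ ^ 2) ∂μ ≤
      2 * ∫⁻ a, ENNReal.ofReal (‖f a‖ ^ 2) ∂μ + 2 * ∫⁻ a, ENNReal.ofReal (‖g a‖ ^ 2) ∂μ := by
  calc _ ≤ ∫⁻ a, 2 * ENNReal.ofReal (‖f a‖ ^ 2) + 2 * ENNReal.ofReal (‖g a‖ ^ 2) ∂μ :=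
        lintegral_mono fun a => ofReal_norm_add_sq_le _ _
    _ = _ := by
      rw [lintegral_add_right _ (by fun_prop), lintegral_const_mul' _ _ ofNat_ne_top,
        lintegral_const_mul' _ _ ofNat_ne_top]

theorem exists_measure_map_eval_eq {ι : Type*} [Fintype ι] (κ : ι → Measure β) {c : ℝ≥0∞}
    (hκ : ∀ i, κ i univ = c) (hc₀ : c ≠ 0) (hc : c ≠ ∞) :
    ∃ ρ : Measure (ι → β), (∀ i, ρ.map (Function.eval i) = κ i) ∧
      ∀ g : ι → β, (∀ i, κ i {g i} ≠ 0) → ρ {g} ≠ 0 := by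
  classical
  have hν : ∀ i, IsProbabilityMeasure (c⁻¹ • κ i) := fun i =>
    ⟨by rw [Measure.smul_apply, hκ, smul_eq_mul, ENNReal.inv_mul_cancel hc₀ hc]⟩
  refine ⟨c • Measure.pi fun i => c⁻¹ • κ i, fun i => ?_, fun g hg => ?_⟩
  · rw [Measure.map_smul, Measure.pi_map_eval]
    simp only [measure_univ, Finset.prod_const_one, smul_smul]
    rw [one_mul, ENNReal.mul_inv_cancel hc₀ hc, one_smul]
  · simp only [Measure.smul_apply, Measure.pi_singleton, smul_eq_mul]
    exact mul_ne_zero hc₀ (Finset.prod_ne_zero_iff.2 fun i _ =>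
      mul_ne_zero (ENNReal.inv_ne_zero.2 hc) (hg i))

theorem measure_eq_zero_of_forall_singleton {μ : Measure β} {S s : Set β} (hS : S.Countable)
    (hμS : μ Sᶜ = 0) (h : ∀ y ∈ s, μ {y} = 0) : μ s = 0 := by
  have hsS : μ (s ∩ S) = 0 :=
    (measure_null_iff_singleton (hS.mono inter_subset_right)).2 fun y hy => h y hy.1
  refine measure_mono_null (fun y hy => ?_) (measure_union_null hsS hμS)
  by_cases hyS : y ∈ S
  exacts [Or.inl ⟨hy, hyS⟩, Or.inr hyS]

theorem exists_measure_singleton_ne_zero {μ : Measure β} {S : Set β} (hS : S.Countable)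
    (hμS : μ Sᶜ = 0) (hμ : μ ≠ 0) : ∃ y, μ {y} ≠ 0 := by
  by_contra! h
  exact hμ (Measure.measure_univ_eq_zero.1
    (measure_eq_zero_of_forall_singleton hS hμS fun y _ => h y))

theorem exists_measure_compl_singleton_eq_zero_of_ae_sum_smul_eq {ι E : Type*} [Fintype ι]
    [DecidableEq ι] [AddCommGroup E] [Module ℝ E] [MeasurableSpace E] {l : ι → ℝ}
    (hl : ∀ i, l i ≠ 0) {κ : ι → Measure E} {S : ι → Set E} (hS : ∀ i, (S i).Countable)
    (hκS : ∀ i, κ i (S i)ᶜ = 0) (hκ : ∀ i, κ i ≠ 0) {ρ : Measure (ι → E)}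
    (hρ : ∀ g, (∀ i, κ i {g i} ≠ 0) → ρ {g} ≠ 0) {x : E} (hx : ∀ᵐ g ∂ρ, ∑ i, l i • g i = x) :
    ∃ y : ι → E, (∀ i, κ i {y i}ᶜ = 0) ∧ x = ∑ i, l i • y i := by
  have hcent (g : ι → E) (hg : ∀ i, κ i {g i} ≠ 0) : ∑ i, l i • g i = x := by
    by_contra h
    exact hρ g hg (measure_mono_null (singleton_subset_iff.2 h) (ae_iff.1 hx))
  choose y hy using fun i => exists_measure_singleton_ne_zero (hS i) (hκS i) (hκ i)
  refine ⟨y, fun i => measure_eq_zero_of_forall_singleton (hS i) (hκS i) fun a ha => ?_,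
    (hcent y hy).symm⟩
  by_contra ha'
  refine ha (eq_of_sum_smul_update_eq (hl i) ((hcent _ fun j => ?_).trans (hcent y hy).symm))
  rcases eq_or_ne j i with rfl | hj
  · simpa using ha'
  · simpa [hj] using hy j

variable [MeasurableSingletonClass α]

theorem setLIntegral_fst_preimage_singleton (π : Measure (α × β)) (x : α)
    (f : α × β → ℝ≥0∞) :
    ∫⁻ p in Prod.fst ⁻¹' {x}, f p ∂π = ∫⁻ y, f (x, y) ∂(π.comap (Prod.mk x)) := by
  rw [← Measure.map_comap_prodMk, (measurableEmbedding_prodMk_left x).lintegral_map]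

end MeasureTheory

section TransportCost

variable {d : ℕ}

noncomputable def transportCost (π : Measure (Pt d × Pt d)) : ℝ≥0∞ :=
  ∫⁻ p, ENNReal.ofReal (‖p.1 - p.2‖ ^ 2) ∂π

theorem transportCost_lt_top {π : Measure (Pt d × Pt d)} {P Q : Measure (Pt d)}
    (hπP : π.map Prod.fst = P) (hπQ : π.map Prod.snd = Q) (hP : FiniteSecondMoment P)
    (hQ : FiniteSecondMoment Q) : transportCost π < ∞ := by
  have key := lintegral_ofReal_norm_add_sq_le π Prod.fst (g := fun p => -p.2) (by fun_prop)
  simp only [← sub_eq_add_neg, norm_neg] at key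
  rw [FiniteSecondMoment, ← hπP, lintegral_map (by fun_prop) measurable_fst] at hP
  rw [FiniteSecondMoment, ← hπQ, lintegral_map (by fun_prop) measurable_snd] at hQ
  exact key.trans_lt (by finiteness)

theorem FiniteSecondMoment.of_transportCost_lt_top {π : Measure (Pt d × Pt d)}
    {P Q : Measure (Pt d)} (hπP : π.map Prod.fst = P) (hπQ : π.map Prod.snd = Q)
    (hπ : transportCost π < ∞) (hQ : FiniteSecondMoment Q) : FiniteSecondMoment P := by
  have key := lintegral_ofReal_norm_add_sq_le π (fun p => p.1 - p.2) measurable_snd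
  simp only [sub_add_cancel] at key
  rw [FiniteSecondMoment, ← hπQ, lintegral_map (by fun_prop) measurable_snd] at hQ
  rw [FiniteSecondMoment, ← hπP, lintegral_map (by fun_prop) measurable_fst]
  exact key.trans_lt (by finiteness)

theorem FinitelySupported.finiteSecondMoment {P : Measure (Pt d)} [IsFiniteMeasure P]
    (hP : FinitelySupported P) : FiniteSecondMoment P := by
  rw [FiniteSecondMoment, ← Measure.restrict_eq_self_of_ae_mem (ae_iff.2 hP.2),
    ← hP.1.coe_toFinset, lintegral_finset]
  exact ENNReal.sum_lt_top.2 fun y _ => ENNReal.mul_lt_top ofReal_lt_top (measure_lt_top P {y})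

theorem W2sq_le_transportCost {π : Measure (Pt d × Pt d)} {P Q : Measure (Pt d)}
    (hπ : π.map Prod.fst = P ∧ π.map Prod.snd = Q) : W2sq P Q ≤ transportCost π :=
  iInf₂_le π hπ

end TransportCost

section Barycenter

variable {d N : ℕ} {l : Fin N → ℝ}

open Measure in
theorem sum_transportCost_eq_replaceFiber_add (hl : ∀ i, 0 ≤ l i) (hsum : ∑ i, l i = 1)
    (π : Fin N → Measure (Pt d × Pt d)) (x : Pt d) {ρ : Measure (Fin N → Pt d)}
    (hρ : ∀ i, ρ.map (Function.eval i) = (π i).comap (Prod.mk x)) :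
    ∑ i, ENNReal.ofReal (l i) * transportCost (π i) =
      ∑ i, ENNReal.ofReal (l i) *
          transportCost ((π i).replaceFiber x (ρ.map fun g => (∑ j, l j • g j, g i))) +
        ∫⁻ g, ENNReal.ofReal (‖x - ∑ j, l j • g j‖ ^ 2) ∂ρ := by
  set R : Fin N → ℝ≥0∞ := fun i =>
    ∫⁻ p in Prod.fst ⁻¹' {x}ᶜ, ENNReal.ofReal (‖p.1 - p.2‖ ^ 2) ∂π i
  have hcost (i : Fin N) :
      transportCost (π i) = R i + ∫⁻ g, ENNReal.ofReal (‖x - g i‖ ^ 2) ∂ρ := by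
    rw [transportCost, ← lintegral_add_compl _ (measurable_fst (measurableSet_singleton x)),
      add_comm, setLIntegral_fst_preimage_singleton, ← hρ i,
      lintegral_map (by fun_prop) (measurable_pi_apply i)]
    rfl
  have hcost' (i : Fin N) :
      transportCost ((π i).replaceFiber x (ρ.map fun g => (∑ j, l j • g j, g i))) =
        R i + ∫⁻ g, ENNReal.ofReal (‖∑ j, l j • g j - g i‖ ^ 2) ∂ρ := by
    rw [transportCost, replaceFiber, lintegral_add_measure,
      lintegral_map (by fun_prop) (by fun_prop)]
  have hswap (f : Fin N → (Fin N → Pt d) → ℝ≥0∞) (hf : ∀ i, Measurable (f i)) :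
      ∑ i, ENNReal.ofReal (l i) * ∫⁻ g, f i g ∂ρ = ∫⁻ g, ∑ i, ENNReal.ofReal (l i) * f i g ∂ρ := by
    rw [lintegral_finsetSum _ fun i _ => (hf i).const_mul _]
    simp_rw [lintegral_const_mul _ (hf _)]
  simp_rw [hcost, hcost', mul_add, Finset.sum_add_distrib]
  rw [hswap _ fun i => by fun_prop, hswap _ fun i => by fun_prop, add_assoc,
    ← lintegral_add_left (by fun_prop)]
  congr 2 with g
  rw [sum_ofReal_mul_ofReal_norm_sub_sq hl hsum, add_comm]

open Measure in
theorem ae_sum_smul_eq_of_optimal (hl : ∀ i, 0 < l i) (hsum : ∑ i, l i = 1)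
    {Pm : Fin N → Measure (Pt d)} (hmom : ∀ i, FiniteSecondMoment (Pm i))
    {Pbar : Measure (Pt d)} (hbar : IsBarycenter l Pm Pbar) {π : Fin N → Measure (Pt d × Pt d)}
    (hcoupl : ∀ i, (π i).map Prod.fst = Pbar ∧ (π i).map Prod.snd = Pm i)
    (hopt : ∑ i, ENNReal.ofReal (l i) * transportCost (π i) = phi l Pm Pbar) (x : Pt d)
    {ρ : Measure (Fin N → Pt d)} (hρ : ∀ i, ρ.map (Function.eval i) = (π i).comap (Prod.mk x)) :
    ∀ᵐ g ∂ρ, ∑ i, l i • g i = x := by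
  obtain ⟨hP, hPmom, hmin⟩ := hbar
  obtain ⟨i₀⟩ : Nonempty (Fin N) :=
    Finset.univ_nonempty_iff.1 (Finset.nonempty_of_sum_ne_zero (hsum ▸ one_ne_zero))
  set π' := fun i => (π i).replaceFiber x (ρ.map fun g => (∑ j, l j • g j, g i))
  set Q := Pbar.restrict {x}ᶜ + ρ.map fun g => ∑ j, l j • g j
  have hπ' (i : Fin N) : (π' i).map Prod.fst = Q ∧ (π' i).map Prod.snd = Pm i := by
    refine ⟨?_, ?_⟩
    · rw [map_fst_replaceFiber, (hcoupl i).1, map_map measurable_fst (by fun_prop)]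
      rfl
    · rw [map_snd_replaceFiber _ _ _ (by rw [map_map measurable_snd (by fun_prop)]; exact hρ i),
        (hcoupl i).2]
  have hsplit := sum_transportCost_eq_replaceFiber_add (fun i => (hl i).le) hsum π x hρ
  have hT : ∑ i, ENNReal.ofReal (l i) * transportCost (π i) < ∞ :=
    ENNReal.sum_lt_top.2 fun i _ => ENNReal.mul_lt_top ofReal_lt_top
      (transportCost_lt_top (hcoupl i).1 (hcoupl i).2 hPmom (hmom i))
  have hT' : ∑ i, ENNReal.ofReal (l i) * transportCost (π' i) < ∞ :=
    (le_self_add.trans_eq hsplit.symm).trans_lt hT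
  have hQ : IsProbabilityMeasure Q := ⟨by
    rw [← (hπ' i₀).1, map_fst_univ_eq_map_snd_univ, (hπ' i₀).2, ← (hcoupl i₀).2,
      ← map_fst_univ_eq_map_snd_univ, (hcoupl i₀).1, measure_univ]⟩
  have hQmom : FiniteSecondMoment Q :=
    .of_transportCost_lt_top (hπ' i₀).1 (hπ' i₀).2 (ENNReal.lt_top_of_mul_ne_top_right
      (ENNReal.sum_lt_top.1 hT' i₀ (Finset.mem_univ _)).ne (by simpa using hl i₀)) (hmom i₀)
  have hle : ∑ i, ENNReal.ofReal (l i) * transportCost (π i) ≤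
      ∑ i, ENNReal.ofReal (l i) * transportCost (π' i) :=
    hopt ▸ (hmin Q hQ hQmom).trans
      (Finset.sum_le_sum fun i _ => mul_le_mul_right (W2sq_le_transportCost (hπ' i)) _)
  rw [hsplit] at hle
  have hzero := nonpos_iff_eq_zero.1
    (ENNReal.le_of_add_le_add_left hT'.ne (hle.trans_eq (add_zero _).symm))
  filter_upwards [(lintegral_eq_zero_iff (by fun_prop)).1 hzero] with g hg
  exact (sub_eq_zero.1 (norm_eq_zero.1 ((sq_nonpos_iff _).1 (ENNReal.ofReal_eq_zero.1 hg)))).symm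

end Barycenter

theorem optimal_transport_nonmass_splitting_general {d N : ℕ}
    (l : Fin N → ℝ) (Pm : Fin N → Measure (Pt d))
    (hl : ∀ i, 0 < l i) (hsum : ∑ i, l i = 1)
    (hfin : ∀ i, FinitelySupported (Pm i))
    (Pbar : Measure (Pt d)) (hbar : IsBarycenter l Pm Pbar)
    (π : Fin N → Measure (Pt d × Pt d))
    (hcoupl : ∀ i, (π i).map Prod.fst = Pbar ∧ (π i).map Prod.snd = Pm i)
    (hopt : ∑ i, ENNReal.ofReal (l i) * ∫⁻ p, ENNReal.ofReal (‖p.1 - p.2‖ ^ 2) ∂(π i) =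
      phi l Pm Pbar) :
    ∀ x ∈ msupp Pbar, ∃ y : Fin N → Pt d,
      (∀ i, y i ∈ msupp (Pm i) ∧
        π i {(x, y i)} = Pbar {x} ∧
        ∀ y' : Pt d, π i {(x, y')} ≠ 0 → y' = y i) ∧
      x = ∑ i, l i • y i := by
  intro x hx
  have := hbar.1
  have hPm (i : Fin N) : IsProbabilityMeasure (Pm i) := ⟨by
    rw [← (hcoupl i).2, ← Measure.map_fst_univ_eq_map_snd_univ, (hcoupl i).1, measure_univ]⟩
  set κ := fun i => (π i).comap (Prod.mk x)
  have hκ_univ (i : Fin N) : κ i univ = Pbar {x} := by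
    rw [Measure.comap_prodMk_univ, (hcoupl i).1]
  have hκ_le (i : Fin N) : κ i ≪ Pm i :=
    Measure.absolutelyContinuous_of_le ((hcoupl i).2 ▸ Measure.comap_prodMk_le_map_snd (π i) x)
  obtain ⟨ρ, hρ, hρ_atom⟩ := exists_measure_map_eval_eq κ hκ_univ hx (measure_ne_top _ _)
  obtain ⟨y, hy, hxy⟩ := exists_measure_compl_singleton_eq_zero_of_ae_sum_smul_eq
    (fun i => (hl i).ne') (fun i => (hfin i).1.countable) (fun i => hκ_le i (hfin i).2)
    (fun i h => hx (by rw [← hκ_univ i, h, Measure.coe_zero, Pi.zero_apply])) hρ_atom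
    (ae_sum_smul_eq_of_optimal hl hsum (fun i => (hfin i).finiteSecondMoment) hbar hcoupl
      hopt x hρ)
  have hπ_κ (i : Fin N) (y' : Pt d) : π i {(x, y')} = κ i {y'} := by
    rw [Measure.comap_prodMk_apply, singleton_prod_singleton]
  have hmass (i : Fin N) : κ i {y i} = Pbar {x} := by
    rw [← hκ_univ i, ← measure_add_measure_compl (measurableSet_singleton (y i)), hy i, add_zero]
  refine ⟨y, fun i => ⟨fun h => hx ?_, (hπ_κ i _).trans (hmass i), fun y' hy' => ?_⟩, hxy⟩
  · rw [← hmass i]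
    exact hκ_le i h
  · by_contra hne
    exact hy' ((hπ_κ i y').trans (measure_mono_null (singleton_subset_iff.2 hne) (hy i)))

/-- any optimal transport (couplings πᵢ realizing φ(P̄)) from a
barycenter is non-mass splitting: each support point x of P̄ sends all of its
mass to exactly one support point yᵢ(x) of each Pᵢ, and x is the weighted
centroid of the yᵢ(x). -/
theorem optimal_transport_nonmass_splitting {d N : ℕ}
    (l : Fin N → ℝ) (Pm : Fin N → Measure (Pt d))
    (hl : ∀ i, 0 < l i) (hsum : ∑ i, l i = 1)
    (hprob : ∀ i, IsProbabilityMeasure (Pm i))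
    (hfin : ∀ i, FinitelySupported (Pm i))
    (Pbar : Measure (Pt d)) (hbar : IsBarycenter l Pm Pbar)
    (π : Fin N → Measure (Pt d × Pt d))
    (hcoupl : ∀ i, (π i).map Prod.fst = Pbar ∧ (π i).map Prod.snd = Pm i)
    (hopt : ∑ i, ENNReal.ofReal (l i) * ∫⁻ p, ENNReal.ofReal (‖p.1 - p.2‖ ^ 2) ∂(π i) =
      phi l Pm Pbar) :
    ∀ x ∈ msupp Pbar, ∃ y : Fin N → Pt d,
      (∀ i, y i ∈ msupp (Pm i) ∧
        π i {(x, y i)} = Pbar {x} ∧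
        ∀ y' : Pt d, π i {(x, y')} ≠ 0 → y' = y i) ∧
      x = ∑ i, l i • y i :=
  optimal_transport_nonmass_splitting_general l Pm hl hsum hfin Pbar hbar π hcoupl hopt
end

section
/- The approximation factor 2 for restricting the support to S_org is tight: there exist discrete probability measures P_1, …, P_N on ℝ^d and weights λ_1, …, λ_N > 0 with ∑_{i=1}^N λ_i = 1 such that, with P̄ a barycenter and P̄_org a minimizer of φ among probability measures supported in S_org = ∪_{i=1}^N supp(P_i), one has φ(P̄_org) = 2 · φ(P̄) > 0. Concretely, this holds for N = 2, P_1 = δ_{x_1}, P_2 = δ_{x_2} with x_1 ≠ x_2, and λ_1 = λ_2 = 1/2. -/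
open MeasureTheory ENNReal

/-! Any coupling of `P` with a Dirac mass is the pushforward of `P` under `y ↦ (y, x)`, so
`W₂(P, δ_x)² = ∫ ‖y - x‖² dP`. Hence for `P₁ = δ_{x₁}`, `P₂ = δ_{x₂}` and weights `1/2`, the
objective is `φ(P) = ∫ (‖y - x₁‖² + ‖y - x₂‖²)/2 dP`. On `S_org = {x₁, x₂}` the integrand is
`‖x₁ - x₂‖²/2`, whereas everywhere it is at least `‖x₁ - x₂‖²/4` (triangle inequality and
`(a + b)² ≤ 2 (a² + b²)`), with equality at the midpoint. So every barycenter has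
`φ = ‖x₁ - x₂‖²/4` and every measure supported in `S_org` has twice that. -/

lemma msupp_dirac {α : Type*} [MeasurableSpace α] [MeasurableSingletonClass α] (x : α) :
    msupp (Measure.dirac x) = {x} := by
  ext y
  by_cases h : x = y <;> simp [msupp, h, eq_comm]

lemma W2sq_dirac_right {d : ℕ} (P : Measure (Pt d)) [IsProbabilityMeasure P] (x : Pt d) :
    W2sq P (Measure.dirac x) = ∫⁻ y, ENNReal.ofReal (dist y x ^ 2) ∂P := by
  simp only [W2sq, ← dist_eq_norm]
  have hpair : Measurable fun y : Pt d => (y, x) := by fun_prop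
  apply le_antisymm
  · refine iInf₂_le_of_le (P.map fun y => (y, x)) ⟨?_, ?_⟩ ?_
    · rw [Measure.map_map measurable_fst hpair]
      exact Measure.map_id
    · rw [Measure.map_map measurable_snd hpair]
      simp [Function.comp_def, Measure.map_const]
    · rw [lintegral_map (by fun_prop) hpair]
  · refine le_iInf₂ fun π ⟨hfst, hsnd⟩ => le_of_eq ?_
    have hsnd_ae : ∀ᵐ p ∂π, p.2 = x := by
      refine ae_of_ae_map (p := fun z => z = x) measurable_snd.aemeasurable ?_
      rw [hsnd, ae_dirac_eq]
      exact Filter.eventually_pure.mpr rfl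
    rw [← hfst, lintegral_map (by fun_prop) measurable_fst]
    refine lintegral_congr_ae ?_
    filter_upwards [hsnd_ae] with p hp
    rw [hp]

lemma phi_two_dirac_half {d : ℕ} (x₁ x₂ : Pt d) (P : Measure (Pt d)) [IsProbabilityMeasure P] :
    phi ![1 / 2, 1 / 2] ![Measure.dirac x₁, Measure.dirac x₂] P
      = ∫⁻ y, ENNReal.ofReal ((dist y x₁ ^ 2 + dist y x₂ ^ 2) / 2) ∂P := by
  have hhalf (a : ℝ) : ENNReal.ofReal (1 / 2) * ENNReal.ofReal a = ENNReal.ofReal (a / 2) := by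
    rw [← ENNReal.ofReal_mul (by norm_num), one_div_mul_eq_div]
  simp only [phi, Fin.sum_univ_two, Matrix.cons_val_zero, Matrix.cons_val_one,
    W2sq_dirac_right]
  rw [← lintegral_const_mul _ (by fun_prop), ← lintegral_const_mul _ (by fun_prop),
    ← lintegral_add_left (by fun_prop)]
  refine lintegral_congr fun y => ?_
  rw [hhalf, hhalf, ← ENNReal.ofReal_add (by positivity) (by positivity), add_div]

lemma dist_sq_div_four_le {X : Type*} [PseudoMetricSpace X] (x₁ x₂ y : X) :
    dist x₁ x₂ ^ 2 / 4 ≤ (dist y x₁ ^ 2 + dist y x₂ ^ 2) / 2 := by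
  have htri : dist x₁ x₂ ≤ dist y x₁ + dist y x₂ := dist_triangle_left x₁ x₂ y
  nlinarith [dist_nonneg (x := x₁) (y := x₂), sq_nonneg (dist y x₁ - dist y x₂)]

lemma finiteSecondMoment_dirac {d : ℕ} (x : Pt d) : FiniteSecondMoment (Measure.dirac x) := by
  simp [FiniteSecondMoment, lintegral_dirac]

section TwoDirac

variable {d : ℕ} (x₁ x₂ : Pt d)

lemma origSupport_two_dirac : origSupport ![Measure.dirac x₁, Measure.dirac x₂] = {x₁, x₂} := by
  ext y
  simp [origSupport, Fin.exists_fin_two, msupp_dirac]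

lemma phi_two_dirac_half_of_measure_compl_pair (P : Measure (Pt d)) [IsProbabilityMeasure P]
    (hP : P {x₁, x₂}ᶜ = 0) :
    phi ![1 / 2, 1 / 2] ![Measure.dirac x₁, Measure.dirac x₂] P
      = ENNReal.ofReal (dist x₁ x₂ ^ 2 / 2) := by
  have hpair : ∀ᵐ y ∂P, y = x₁ ∨ y = x₂ := by
    filter_upwards [measure_eq_zero_iff_ae_notMem.mp hP] with y hy
    simpa [or_iff_not_imp_left] using hy
  rw [phi_two_dirac_half, ← mul_one (ENNReal.ofReal _), ← measure_univ (μ := P),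
    ← lintegral_const]
  refine lintegral_congr_ae ?_
  filter_upwards [hpair] with y hy
  rcases hy with rfl | rfl <;> simp [dist_comm]

lemma le_phi_two_dirac_half (P : Measure (Pt d)) [IsProbabilityMeasure P] :
    ENNReal.ofReal (dist x₁ x₂ ^ 2 / 4)
      ≤ phi ![1 / 2, 1 / 2] ![Measure.dirac x₁, Measure.dirac x₂] P := by
  rw [phi_two_dirac_half, ← mul_one (ENNReal.ofReal _), ← measure_univ (μ := P),
    ← lintegral_const]
  exact lintegral_mono fun y => ENNReal.ofReal_le_ofReal (dist_sq_div_four_le x₁ x₂ y)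

lemma phi_two_dirac_half_dirac_midpoint :
    phi ![1 / 2, 1 / 2] ![Measure.dirac x₁, Measure.dirac x₂] (Measure.dirac (midpoint ℝ x₁ x₂))
      = ENNReal.ofReal (dist x₁ x₂ ^ 2 / 4) := by
  rw [phi_two_dirac_half, lintegral_dirac, dist_midpoint_left, dist_midpoint_right]
  congr 1
  norm_num
  ring

lemma IsBarycenter.phi_two_dirac_half {P : Measure (Pt d)}
    (hP : IsBarycenter ![1 / 2, 1 / 2] ![Measure.dirac x₁, Measure.dirac x₂] P) :
    phi ![1 / 2, 1 / 2] ![Measure.dirac x₁, Measure.dirac x₂] P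
      = ENNReal.ofReal (dist x₁ x₂ ^ 2 / 4) := by
  obtain ⟨hprob, -, hmin⟩ := hP
  refine le_antisymm ?_ (le_phi_two_dirac_half x₁ x₂ P)
  rw [← phi_two_dirac_half_dirac_midpoint]
  exact hmin _ inferInstance (finiteSecondMoment_dirac _)

end TwoDirac

theorem orig_support_two_approx_tight_general {d : ℕ} (x₁ x₂ : Pt d) (hx : x₁ ≠ x₂)
    (l : Fin 2 → ℝ) (hl : l = ![1 / 2, 1 / 2])
    (Pm : Fin 2 → Measure (Pt d))
    (hPm : Pm = ![Measure.dirac x₁, Measure.dirac x₂])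
    (Pbar : Measure (Pt d)) (hbar : IsBarycenter l Pm Pbar)
    (Porg : Measure (Pt d)) (hPorgProb : IsProbabilityMeasure Porg)
    (hPorgSupp : Porg (origSupport Pm)ᶜ = 0) :
    phi l Pm Porg = 2 * phi l Pm Pbar ∧ 0 < phi l Pm Pbar := by
  subst hl hPm
  rw [origSupport_two_dirac] at hPorgSupp
  rw [phi_two_dirac_half_of_measure_compl_pair x₁ x₂ Porg hPorgSupp, hbar.phi_two_dirac_half]
  have hdist : 0 < dist x₁ x₂ := dist_pos.mpr hx
  refine ⟨?_, ENNReal.ofReal_pos.mpr (by positivity)⟩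
  rw [two_mul, ← ENNReal.ofReal_add (by positivity) (by positivity)]
  ring_nf

/-- the 2-approximation factor is tight, realized by two Dirac
measures at distinct points with weights 1/2, 1/2: there, every minimizer of φ
over measures supported in S_org satisfies φ(P̄_org) = 2 φ(P̄) > 0. -/
theorem orig_support_two_approx_tight {d : ℕ} (x₁ x₂ : Pt d) (hx : x₁ ≠ x₂)
    (l : Fin 2 → ℝ) (hl : l = ![1 / 2, 1 / 2])
    (Pm : Fin 2 → Measure (Pt d))
    (hPm : Pm = ![Measure.dirac x₁, Measure.dirac x₂])
    (Pbar : Measure (Pt d)) (hbar : IsBarycenter l Pm Pbar)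
    (Porg : Measure (Pt d)) (hPorgProb : IsProbabilityMeasure Porg)
    (hPorgSupp : Porg (origSupport Pm)ᶜ = 0)
    (hPorgOpt : ∀ Q : Measure (Pt d), IsProbabilityMeasure Q →
      Q (origSupport Pm)ᶜ = 0 → phi l Pm Porg ≤ phi l Pm Q) :
    phi l Pm Porg = 2 * phi l Pm Pbar ∧ 0 < phi l Pm Pbar :=
  orig_support_two_approx_tight_general x₁ x₂ hx l hl Pm hPm Pbar hbar Porg hPorgProb hPorgSupp
end

section
/- Let Q_1, …, Q_N be finitely supported nonnegative measures on ℝ^d, each of the same total mass m > 0. Then there exists a finitely supported nonnegative measure γ on (ℝ^d)^N whose i-th marginal equals Q_i for every i = 1, …, N and whose support satisfies |supp(γ)| ≤ ∑_{i=1}^N |supp(Q_i)| − N + 1. -/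
open MeasureTheory ENNReal

/-!
A greedy peeling, as in the north-west corner rule. Choose a support point `yᵢ` of each marginal
and let `δ` be the smallest of the weights `Qᵢ {yᵢ}`. An atom of mass `δ` at `(y₁, …, y_N)`
accounts for `δ` of every marginal; the remainders again have equal masses, and the marginal
attaining the minimum has lost the point `yᵢ`. So each atom of `γ` costs at least one support
point of the marginals, and the last atom, which exhausts all `N` marginals at once, costs `N`;
hence at most `∑ |supp Qᵢ| - N + 1` atoms.
-/

open scoped NNReal Finset

namespace Finsupp

theorem card_support_single_add_le {α M : Type*} [AddCommMonoid M] (a : α) (b : M)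
    (f : α →₀ M) : #(single a b + f).support ≤ #f.support + 1 := by
  classical
  calc #(single a b + f).support ≤ #({a} ∪ f.support) :=
        Finset.card_le_card (support_add.trans (Finset.union_subset_union support_single_subset
          subset_rfl))
    _ ≤ #f.support + 1 := by simpa [add_comm] using Finset.card_union_le {a} f.support

theorem exists_sparse_coupling {ι α R : Type*} [Fintype ι] [AddCommMonoid R] [LinearOrder R]
    [IsOrderedCancelAddMonoid R] [CanonicallyOrderedAdd R] [Sub R] [OrderedSub R]
    (w : ι → α →₀ R) {M : R} (hw : ∀ i, (w i).degree = M) (hM : M ≠ 0) :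
    ∃ W : (ι → α) →₀ R, (∀ i, W.mapDomain (· i) = w i) ∧
      #W.support + Fintype.card ι ≤ ∑ i, #(w i).support + 1 := by
  induction hn : ∑ i, #(w i).support using Nat.strong_induction_on generalizing w M with
  | _ n ih =>
  have hne : ∀ i, (w i).support.Nonempty := fun i =>
    support_nonempty_iff.2 fun h => hM (by rw [← hw i, h, map_zero])
  have hcard : Fintype.card ι ≤ n := by
    rw [← hn, Fintype.card_eq_sum_ones]
    exact Finset.sum_le_sum fun i _ => (hne i).card_pos
  rcases isEmpty_or_nonempty ι with hι | hι
  · exact ⟨0, isEmptyElim, by simp⟩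
  choose y hy using hne
  obtain ⟨i₀, hi₀⟩ := Finite.exists_min fun i => w i (y i)
  set δ := w i₀ (y i₀)
  set w' : ι → α →₀ R := fun i => w i - single (y i) δ
  have hw_eq : ∀ i, w i = single (y i) δ + w' i := fun i =>
    (add_tsub_cancel_of_le (single_le_iff.2 (hi₀ i))).symm
  have hw' : ∀ i, (w' i).degree = M - δ := fun i => by
    rw [← hw i, hw_eq i, map_add, degree_single, add_tsub_cancel_left]
  have hlt : ∑ i, #(w' i).support < n := by
    rw [← hn]
    refine Finset.sum_lt_sum (fun i _ => Finset.card_le_card (support_mono tsub_le_self))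
      ⟨i₀, Finset.mem_univ _, Finset.card_lt_card ⟨support_mono tsub_le_self, fun h => ?_⟩⟩
    simpa [w', δ] using h (hy i₀)
  obtain ⟨W', hW', hW'card⟩ : ∃ W' : (ι → α) →₀ R, (∀ i, W'.mapDomain (· i) = w' i) ∧
      #W'.support + Fintype.card ι ≤ n := by
    by_cases hδ : M - δ = 0
    · refine ⟨0, fun i => ?_, by simpa using hcard⟩
      rw [mapDomain_zero, eq_comm, ← degree_eq_zero_iff, hw', hδ]
    · obtain ⟨W', hW', hW'card⟩ := ih _ hlt w' hw' hδ rfl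
      exact ⟨W', hW', by omega⟩
  refine ⟨single y δ + W', fun i => by rw [mapDomain_add, mapDomain_single, hW', hw_eq], ?_⟩
  have := card_support_single_add_le y δ W'
  omega

section Measure

variable {β γ : Type*} [MeasurableSpace β] [MeasurableSpace γ]

noncomputable def toMeasure (w : β →₀ ℝ≥0) : Measure β :=
  w.sum fun x c => (c : ℝ≥0∞) • Measure.dirac x

theorem toMeasure_univ (w : β →₀ ℝ≥0) : w.toMeasure Set.univ = w.degree := by
  simp [toMeasure, sum, degree_apply]

theorem toMeasure_singleton [MeasurableSingletonClass β] (w : β →₀ ℝ≥0) (x : β) :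
    w.toMeasure {x} = w x := by
  classical
  simp +contextual [toMeasure, sum, Set.indicator_apply, eq_comm]

theorem msupp_toMeasure [MeasurableSingletonClass β] (w : β →₀ ℝ≥0) :
    msupp w.toMeasure = w.support := by
  ext x
  simp [msupp, toMeasure_singleton]

theorem finitelySupported_toMeasure [MeasurableSingletonClass β] (w : β →₀ ℝ≥0) :
    FinitelySupported w.toMeasure := by
  refine ⟨msupp_toMeasure w ▸ w.support.finite_toSet, ?_⟩
  rw [msupp_toMeasure]
  simp +contextual [toMeasure, sum]

theorem map_toMeasure {f : β → γ} (hf : Measurable f) (w : β →₀ ℝ≥0) :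
    w.toMeasure.map f = (w.mapDomain f).toMeasure := by
  rw [toMeasure, toMeasure, sum_mapDomain_index (by simp) (by simp [add_smul]), sum,
    Measure.map_finset_sum hf.aemeasurable]
  simp [Measure.map_smul, Measure.map_dirac' hf, sum]

end Measure

end Finsupp

namespace FinitelySupported

variable {β : Type*} [MeasurableSpace β] [MeasurableSingletonClass β]

theorem ext {μ ν : Measure β} (hμ : FinitelySupported μ) (hν : FinitelySupported ν)
    (h : ∀ x, μ {x} = ν {x}) : μ = ν := by
  have hsupp : msupp μ = msupp ν := Set.ext fun x => not_congr (h x ▸ Iff.rfl)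
  ext s hs
  rw [← measure_inter_conull hμ.2, ← measure_inter_conull (μ := ν) (t := msupp μ) (hsupp ▸ hν.2),
    ← (hμ.1.inter_of_right s).coe_toFinset, ← sum_measure_singleton, ← sum_measure_singleton]
  exact Finset.sum_congr rfl fun x _ => h x

theorem exists_eq_toMeasure {μ : Measure β} [IsFiniteMeasure μ] (hμ : FinitelySupported μ) :
    ∃ w : β →₀ ℝ≥0, w.toMeasure = μ := by
  refine ⟨Finsupp.onFinset hμ.1.toFinset (fun x => (μ {x}).toNNReal) fun x hx => ?_,
    (Finsupp.finitelySupported_toMeasure _).ext hμ fun x => ?_⟩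
  · simpa [msupp] using (ENNReal.toNNReal_ne_zero.1 hx).1
  · simp [Finsupp.toMeasure_singleton]

end FinitelySupported

/-- for finitely supported nonnegative measures Q₁, …, Q_N on ℝ^d
of equal total mass m > 0 there exists a finitely supported measure γ on
(ℝ^d)^N with i-th marginal Qᵢ and at most ∑ i, |supp Qᵢ| - N + 1 support
points. -/
theorem exists_sparse_multicoupling {d N : ℕ}
    (Q : Fin N → Measure (Pt d)) (hfin : ∀ i, FinitelySupported (Q i))
    (m : ℝ) (hm : 0 < m) (hmass : ∀ i, Q i Set.univ = ENNReal.ofReal m) :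
    ∃ γ : Measure (Fin N → Pt d), FinitelySupported γ ∧
      (∀ i, γ.map (fun f => f i) = Q i) ∧
      (msupp γ).ncard ≤ (∑ i, (msupp (Q i)).ncard) - N + 1 := by
  have hfinite : ∀ i, IsFiniteMeasure (Q i) := fun i => ⟨by simp [hmass i]⟩
  choose w hw using fun i => (hfin i).exists_eq_toMeasure
  obtain rfl : Q = fun i => (w i).toMeasure := funext fun i => (hw i).symm
  have hdeg : ∀ i, (w i).degree = m.toNNReal := fun i =>
    ENNReal.coe_inj.1 ((Finsupp.toMeasure_univ _).symm.trans (hmass i))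
  obtain ⟨W, hW, hcard⟩ := Finsupp.exists_sparse_coupling w hdeg (Real.toNNReal_pos.2 hm).ne'
  refine ⟨W.toMeasure, W.finitelySupported_toMeasure,
    fun i => by rw [Finsupp.map_toMeasure (measurable_pi_apply i), hW], ?_⟩
  simp only [Finsupp.msupp_toMeasure, Set.ncard_coe_finset]
  rw [Fintype.card_fin] at hcard
  omega
end
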